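/- arXiv:1404.4249 — 4 statements merged into one kernel-verified Lean document; each statement's English description precedes it below -/
import Mathlib

section
/- Let G be a bipartite graph whose bi-adjacency matrix is a Ferrers matrix (each row i consists of r_i ones followed by zeros), with row sums ordered r_1 ≥ r_2 ≥ … ≥ r_n. Then the number of perfect matchings of G equals r_n · (r_{n-1} − 1) · (r_{n-2} − 2) ⋯ (r_1 − (n−1)), i.e. ∏_{i=1}^{n} (r_{n+1-i} − (i−1)). -/
/-!
Match the shortest row `last n` first: it has `r (last n)` choices of column `c`. Every
other row `i` has `c < r (last n) ≤ r i`, so after deleting row `last n` and column `c`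
(and closing the gap with `c.succAbove`) row `i` keeps exactly `r i - 1` admissible
columns. The remaining rows again form an antitone Ferrers board, and induction on `n`
gives the product.
-/

open Equiv

namespace Equiv.Perm

/-- Sends `a` to `c = p.1` and transports `p.2` along `a.succAbove` and `c.succAbove`, which
identify `Fin n` with the complements of `a` and `c`. -/
def insertAt {n : ℕ} (a : Fin (n + 1)) (p : Fin (n + 1) × Perm (Fin n)) :
    Perm (Fin (n + 1)) :=
  (finSuccEquiv' a).trans ((optionCongr p.2).trans (finSuccEquiv' p.1).symm)

variable {n : ℕ} (a : Fin (n + 1))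

@[simp]
theorem insertAt_apply_self (p : Fin (n + 1) × Perm (Fin n)) : insertAt a p a = p.1 := by
  simp [insertAt, finSuccEquiv'_at, finSuccEquiv'_symm_none]

@[simp]
theorem insertAt_apply_succAbove (p : Fin (n + 1) × Perm (Fin n)) (i : Fin n) :
    insertAt a p (a.succAbove i) = p.1.succAbove (p.2 i) := by
  simp [insertAt, finSuccEquiv'_succAbove, finSuccEquiv'_symm_some]

@[simp]
theorem insertAt_last_apply_castSucc (p : Fin (n + 1) × Perm (Fin n)) (i : Fin n) :
    insertAt (Fin.last n) p i.castSucc = p.1.succAbove (p.2 i) := by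
  simpa using insertAt_apply_succAbove (Fin.last n) p i

theorem insertAt_injective : Function.Injective (insertAt a) := by
  rintro ⟨c, e⟩ ⟨c', e'⟩ h
  obtain rfl : c = c' := by simpa using DFunLike.congr_fun h a
  have he : e = e' := Equiv.ext fun i =>
    c.succAbove_right_injective (by simpa using DFunLike.congr_fun h (a.succAbove i))
  rw [he]

noncomputable def insertAtEquiv : Fin (n + 1) × Perm (Fin n) ≃ Perm (Fin (n + 1)) :=
  Equiv.ofBijective _ ((Fintype.bijective_iff_injective_and_card _).mpr
    ⟨insertAt_injective a, by simp [Fintype.card_perm, Nat.factorial_succ]⟩)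

end Equiv.Perm

theorem Fin.val_succAbove_lt_iff {m t : ℕ} {c : Fin (m + 1)} (hc : (c : ℕ) < t) (x : Fin m) :
    ((c.succAbove x : Fin (m + 1)) : ℕ) < t ↔ (x : ℕ) < t - 1 := by
  rcases lt_or_ge x.castSucc c with h | h
  · rw [Fin.succAbove_of_castSucc_lt _ _ h]
    simp only [Fin.lt_def, Fin.val_castSucc] at h ⊢
    omega
  · rw [Fin.succAbove_of_le_castSucc _ _ h]
    simp only [Fin.le_def, Fin.val_castSucc, Fin.val_succ] at h ⊢
    omega

open Equiv.Perm in
theorem forall_insertAt_last_val_lt_iff {n : ℕ} {r : Fin (n + 1) → ℕ}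
    (hmin : ∀ i, r (Fin.last n) ≤ r i) (p : Fin (n + 1) × Perm (Fin n)) :
    (∀ i, (insertAt (Fin.last n) p i : ℕ) < r i) ↔
      (p.1 : ℕ) < r (Fin.last n) ∧ ∀ j, (p.2 j : ℕ) < r j.castSucc - 1 := by
  simp only [Fin.forall_fin_succ', and_comm (a := ∀ _, _), insertAt_apply_self,
    insertAt_last_apply_castSucc]
  exact and_congr_right fun hc => forall_congr' fun j =>
    Fin.val_succAbove_lt_iff (hc.trans_le (hmin _)) (p.2 j)

open Equiv.Perm in
theorem card_perm_val_lt_succ {n : ℕ} (r : Fin (n + 1) → ℕ)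
    (hmin : ∀ i, r (Fin.last n) ≤ r i) (hle : r (Fin.last n) ≤ n + 1) :
    Fintype.card {σ : Perm (Fin (n + 1)) // ∀ i, (σ i : ℕ) < r i} =
      r (Fin.last n) *
        Fintype.card {e : Perm (Fin n) // ∀ j, (e j : ℕ) < r j.castSucc - 1} := by
  rw [← Fintype.card_congr ((insertAtEquiv (Fin.last n)).subtypeEquiv fun p =>
      (forall_insertAt_last_val_lt_iff hmin p).symm),
    Fintype.card_congr (subtypeProdEquivProd
      (p := fun c : Fin (n + 1) => (c : ℕ) < r (Fin.last n))
      (q := fun e : Perm (Fin n) => ∀ j, (e j : ℕ) < r j.castSucc - 1)),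
    Fintype.card_prod, Fintype.card_fin_lt_of_le hle]

theorem prod_rev_sub_succ {n : ℕ} (r : Fin (n + 1) → ℕ) :
    ∏ i : Fin (n + 1), (r i.rev - (i : ℕ)) =
      r (Fin.last n) * ∏ j : Fin n, (r j.rev.castSucc - 1 - (j : ℕ)) := by
  simp only [Fin.prod_univ_succ, Fin.rev_zero, Fin.val_zero, Nat.sub_zero, Fin.rev_succ,
    Fin.val_succ, Nat.sub_sub, Nat.add_comm 1]

/-- Brualdi–Ryser formula: if the bi-adjacency matrix of a bipartite graph is a
Ferrers matrix (row `i` consists of `r i` ones followed by zeros) with row sums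
ordered `r 1 ≥ r 2 ≥ … ≥ r n`, then the number of perfect matchings (permutations
`σ` with `B i (σ i) = 1`, i.e. `σ i < r i` in 0-indexing) equals
`∏_{i=1}^{n} (r_{n+1-i} − (i−1))`. -/
theorem ferrers_perfect_matching_count (n : ℕ) (r : Fin n → ℕ)
    (hr : Antitone r) (hle : ∀ i, r i ≤ n) :
    Fintype.card {σ : Equiv.Perm (Fin n) // ∀ i, (σ i : ℕ) < r i} =
      ∏ i : Fin n, (r i.rev - (i : ℕ)) := by
  induction n with
  | zero => simp
  | succ n ih =>
    have hr' : Antitone fun j : Fin n => r j.castSucc - 1 :=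
      fun _ _ hjk => Nat.sub_le_sub_right (hr (Fin.castSucc_le_castSucc_iff.mpr hjk)) 1
    have hle' : ∀ j : Fin n, r j.castSucc - 1 ≤ n := fun j => by have := hle j.castSucc; omega
    rw [card_perm_val_lt_succ r (fun i => hr (Fin.le_last i)) (hle _), ih _ hr' hle',
      prod_rev_sub_succ]
end

section
/- For the odd triangle threshold graph G with n×n bi-adjacency matrix A where A_{ij} = 1 iff j ≤ n − i + 1 (n ≥ 2), the number of near-perfect matchings leaving exactly the vertices u_n (last row) and v_n (last column) unmatched equals 2^{n−2}. -/
/-!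
Composing with the reversal `i ↦ m - 1 - i` turns the condition `i + σ i ≤ m` into
`σ i ≤ i + 1`. A permutation `σ` of `Fin (n + 2)` with this property has `σ 0 ∈ {0, 1}`, and
`Equiv.Perm.decomposeFin` splits it as `σ 0` together with a permutation `e` of `Fin (n + 1)`
which has the same property: the swap of `0` and `1` only moves the entry `e i = 0`, which is
allowed in every row. Hence the count doubles with each added row.
-/

open Equiv Equiv.Perm

namespace TriangleCount

lemma val_swap_zero_succ_le_succ_iff {n : ℕ} {p : Fin (n + 2)} (hp : (p : ℕ) < 2)
    (y : Fin (n + 1)) (b : ℕ) : (swap 0 p y.succ : ℕ) ≤ b + 1 ↔ (y : ℕ) ≤ b := by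
  obtain rfl | rfl : p = 0 ∨ p = 1 := by
    rcases Nat.lt_succ_iff_lt_or_eq.mp hp with h | h
    · exact .inl (Fin.ext (by simpa using h))
    · exact .inr (Fin.ext (by simpa using h))
  · simp
  · rcases Fin.eq_zero_or_eq_succ y with rfl | ⟨z, rfl⟩
    · simp
    · rw [swap_apply_of_ne_of_ne (Fin.succ_ne_zero _) (by simp [Fin.ext_iff])]
      simp

lemma decomposeFin_symm_val_le_succ_iff {n : ℕ} (p : Fin (n + 2)) (e : Perm (Fin (n + 1))) :
    (∀ i, (decomposeFin.symm (p, e) i : ℕ) ≤ i + 1) ↔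
      (p : ℕ) < 2 ∧ ∀ i, (e i : ℕ) ≤ i + 1 := by
  rw [Fin.forall_fin_succ, decomposeFin_symm_apply_zero, Fin.val_zero, zero_add,
    ← Nat.lt_succ_iff]
  refine and_congr_right fun hp ↦ forall_congr' fun i ↦ ?_
  rw [decomposeFin_symm_apply_succ, Fin.val_succ]
  exact val_swap_zero_succ_le_succ_iff hp _ _

def permValLeSuccEquiv (n : ℕ) :
    {σ : Perm (Fin (n + 2)) // ∀ i, (σ i : ℕ) ≤ i + 1} ≃
      {p : Fin (n + 2) // (p : ℕ) < 2} ×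
        {e : Perm (Fin (n + 1)) // ∀ i, (e i : ℕ) ≤ i + 1} :=
  (decomposeFin.symm.subtypeEquiv fun pe ↦
      (decomposeFin_symm_val_le_succ_iff pe.1 pe.2).symm).symm.trans subtypeProdEquivProd

theorem card_perm_val_le_succ (n : ℕ) :
    Fintype.card {σ : Perm (Fin (n + 1)) // ∀ i, (σ i : ℕ) ≤ i + 1} = 2 ^ n := by
  induction n with
  | zero => decide
  | succ n ih =>
    have card_lt_two : Fintype.card {p : Fin (n + 2) // (p : ℕ) < 2} = 2 := by
      rw [Fintype.card_subtype, Fin.card_filter_val_lt]; omega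
    rw [Fintype.card_congr (permValLeSuccEquiv n), Fintype.card_prod, card_lt_two, ih, pow_succ']

def permAddLeEquiv (m : ℕ) :
    {σ : Perm (Fin m) // ∀ i : Fin m, (i : ℕ) + (σ i : ℕ) ≤ m} ≃
      {τ : Perm (Fin m) // ∀ i, (τ i : ℕ) ≤ i + 1} :=
  (Equiv.mulRight Fin.revPerm).subtypeEquiv fun σ ↦ by
    rw [← Fin.revPerm.forall_congr_right]
    refine forall_congr' fun i ↦ ?_
    simp only [coe_mulRight, Perm.mul_apply, Fin.revPerm_apply, Fin.val_rev]
    omega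

theorem card_perm_add_le (m : ℕ) :
    Fintype.card {σ : Perm (Fin m) // ∀ i : Fin m, (i : ℕ) + (σ i : ℕ) ≤ m} =
      2 ^ (m - 1) := by
  rw [Fintype.card_congr (permAddLeEquiv m)]
  cases m with
  | zero => decide
  | succ m => exact card_perm_val_le_succ m

end TriangleCount

theorem triangle_near_perfect_count_general (n : ℕ) :
    Fintype.card
        {σ : Equiv.Perm (Fin (n - 1)) // ∀ i : Fin (n - 1), (i : ℕ) + (σ i : ℕ) ≤ n - 1} =
      2 ^ (n - 2) :=
  TriangleCount.card_perm_add_le (n - 1)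

/-- For the odd triangle threshold graph with n×n bi-adjacency matrix `A`,
`A i j = 1` iff `j ≤ n − i + 1` (1-indexed), the number of near-perfect matchings
leaving exactly `u_n` and `v_n` unmatched equals `2^(n−2)`.  This is the permanent
of the (n−1)×(n−1) submatrix obtained by deleting the last row and column, whose
entries (0-indexed over `Fin (n-1)`) are 1 iff `i + j ≤ n - 1`. -/
theorem triangle_near_perfect_count (n : ℕ) (hn : 2 ≤ n) :
    Fintype.card
        {σ : Equiv.Perm (Fin (n - 1)) // ∀ i : Fin (n - 1), (i : ℕ) + (σ i : ℕ) ≤ n - 1} =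
      2 ^ (n - 2) :=
  triangle_near_perfect_count_general n
end

section
/- In the odd triangle threshold graph with n×n Ferrers bi-adjacency matrix A (A_{ij} = 1 iff j ≤ n−i+1), for the middle index n' = ⌈n/2⌉, the number of near-perfect matchings leaving u_{n'} and v_i unmatched is 0 for i < n' and at most 2^{n'−2} for every i. -/
/-!
Delete row `a` and column `b` and list the remaining rows by decreasing index. The board is
again a Ferrers board: the `k`-th row is adjacent to the first `c k` remaining columns, with `c`
monotone, so a row-by-row choice of columns shows that it has at most `∏ k, (c k - k)` perfect
matchings. For the middle row every factor `c k - k` is `0`, `1` or `2`; it vanishes at `k = b`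
when `b < (n - 1) / 2`, and it equals `2` for at most `(n - 1) / 2 - 1` indices `k`.
-/

/-- The number of near-perfect matchings of the triangle threshold graph
(bipartite, edge `{u_i, v_j}` iff `i + j ≤ n - 1` in 0-indexing) leaving exactly
`u_a` and `v_b` unmatched: perfect matchings between the remaining rows and
columns respecting the edge relation. -/
noncomputable def triNearCount (n : ℕ) (a b : Fin n) : ℕ :=
  Fintype.card
    {e : {i : Fin n // i ≠ a} ≃ {j : Fin n // j ≠ b} //
      ∀ i : {i : Fin n // i ≠ a}, (i.1 : ℕ) + ((e i).1 : ℕ) ≤ n - 1}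

open Finset Equiv

lemma Fin.val_succAbove_eq_ite {N : ℕ} (a : Fin (N + 1)) (j : Fin N) :
    (a.succAbove j : ℕ) = if (j : ℕ) < a then (j : ℕ) else j + 1 := by
  split_ifs with h
  · rw [Fin.succAbove_of_castSucc_lt _ _ (by simpa [Fin.lt_def] using h), Fin.val_castSucc]
  · rw [Fin.succAbove_of_le_castSucc _ _ (by simp [Fin.le_def]; omega), Fin.val_succ]

lemma Finset.prod_le_pow_card_filter {ι M : Type*} [CommMonoid M] [Preorder M] [MulLeftMono M]
    {s : Finset ι} (p : ι → Prop) [DecidablePred p] {f : ι → M} {m : M}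
    (h : ∀ i ∈ s, f i ≤ if p i then m else 1) : ∏ i ∈ s, f i ≤ m ^ #{i ∈ s | p i} :=
  calc ∏ i ∈ s, f i ≤ ∏ i ∈ s, (if p i then m else 1) := prod_le_prod' h
    _ = m ^ #{i ∈ s | p i} := by rw [prod_ite, prod_const, prod_const_one, mul_one]

namespace Equiv.Perm

lemma decomposeFin_symm_val_lt_iff {N : ℕ} {c : Fin (N + 1) → ℕ} (hc : Monotone c)
    {p : Fin (N + 1)} (hp : (p : ℕ) < c 0) (e : Perm (Fin N)) :
    (∀ i, (decomposeFin.symm (p, e) i : ℕ) < c i) ↔ ∀ i : Fin N, (e i : ℕ) < c i.succ - 1 := by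
  simp only [Fin.forall_fin_succ, decomposeFin_symm_apply_zero, decomposeFin_symm_apply_succ, hp,
    true_and]
  refine forall_congr' fun i => ?_
  have hc0 : c 0 ≤ c i.succ := hc (Fin.zero_le _)
  by_cases he : (e i).succ = p
  · have : (e i : ℕ) + 1 = p := by rw [← he, Fin.val_succ]
    rw [he, swap_apply_right, Fin.val_zero]
    omega
  · rw [swap_apply_of_ne_of_ne (Fin.succ_ne_zero _) he, Fin.val_succ]
    omega

theorem card_val_lt_le_prod : ∀ {N : ℕ} (c : Fin N → ℕ), Monotone c →
    Fintype.card {σ : Perm (Fin N) // ∀ i, (σ i : ℕ) < c i} ≤ ∏ i, (c i - i)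
  | 0, c, _ => (Fintype.card_subtype_le _).trans (by simp)
  | N + 1, c, hc => by
    have fiber (p : Fin (N + 1)) :
        Fintype.card {e : Perm (Fin N) // ∀ i, (decomposeFin.symm (p, e) i : ℕ) < c i} ≤
          if (p : ℕ) < c 0 then ∏ i : Fin N, (c i.succ - 1 - i) else 0 := by
      split_ifs with hp
      · rw [Fintype.card_congr (subtypeEquivRight (decomposeFin_symm_val_lt_iff hc hp))]
        exact card_val_lt_le_prod _ fun i j hij => Nat.sub_le_sub_right (hc (by simpa)) 1
      · refine (Fintype.card_eq_zero_iff.mpr ⟨fun ⟨e, he⟩ => hp ?_⟩).le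
        simpa using he 0
    calc Fintype.card {σ : Perm (Fin (N + 1)) // ∀ i, (σ i : ℕ) < c i}
        = ∑ p, Fintype.card {e : Perm (Fin N) // ∀ i, (decomposeFin.symm (p, e) i : ℕ) < c i} := by
          rw [← Fintype.card_sigma]
          exact Fintype.card_congr ((decomposeFin.subtypeEquiv fun σ => by simp).trans
            (subtypeProdEquivSigmaSubtype fun p e => ∀ i, (decomposeFin.symm (p, e) i : ℕ) < c i))
      _ ≤ ∑ p : Fin (N + 1), if (p : ℕ) < c 0 then ∏ i : Fin N, (c i.succ - 1 - i) else 0 :=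
          sum_le_sum fun p _ => fiber p
      _ = #{p : Fin (N + 1) | p < c 0} * ∏ i : Fin N, (c i.succ - 1 - i) := by
          rw [sum_ite, sum_const, sum_const_zero, add_zero, smul_eq_mul]
      _ ≤ c 0 * ∏ i : Fin N, (c i.succ - 1 - i) := by
          rw [Fin.card_filter_val_lt]
          exact Nat.mul_le_mul_right _ (min_le_right _ _)
      _ = ∏ i, (c i - i) := by
          simp [Fin.prod_univ_succ, Nat.sub_sub, add_comm]

end Equiv.Perm

/-- The row `u_r`, `r ≠ a`, that is `k`-th among the remaining rows in decreasing order is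
adjacent to the columns `0, …, N - r`, where `N - r` is `k` if `k < N - a` and `k + 1`
otherwise; `triCap N a b k` is the number of these columns other than `b`. -/
def triCap (N a b k : ℕ) : ℕ :=
  if k < N - a then (if b ≤ k then k else k + 1) else (if b ≤ k + 1 then k + 1 else k + 2)

lemma triCap_monotone (N a b : ℕ) : Monotone (triCap N a b) := by
  intro k l hkl
  unfold triCap
  split_ifs <;> omega

lemma triCap_self {N a b : ℕ} (hb : b < N - a) : triCap N a b b = b := by
  simp [triCap, hb]

lemma triCap_sub_le {N a b : ℕ} (hb : b ≤ N) (k : ℕ) :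
    triCap N a b k - k ≤ if N - a ≤ k ∧ k + 2 ≤ N then 2 else 1 := by
  unfold triCap
  split_ifs <;> omega

lemma succAbove_rev_add_succAbove_le_iff_lt_triCap {N : ℕ} (a b : Fin (N + 1)) (k j : Fin N) :
    (a.succAbove k.rev : ℕ) + b.succAbove j ≤ N ↔ (j : ℕ) < triCap N a b k := by
  have := a.isLt
  rw [Fin.val_succAbove_eq_ite, Fin.val_succAbove_eq_ite, Fin.val_rev]
  unfold triCap
  split_ifs <;> omega

lemma triNearCount_eq_card_perm {N : ℕ} (a b : Fin (N + 1)) :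
    triNearCount (N + 1) a b =
      Fintype.card {σ : Perm (Fin N) // ∀ k, (σ k : ℕ) < triCap N a b k} := by
  let rows := Fin.revPerm.trans (finSuccAboveEquiv a)
  refine Fintype.card_congr (subtypeEquiv (rows.equivCongr (finSuccAboveEquiv b)) fun σ => ?_).symm
  rw [← rows.forall_congr_right]
  simp only [equivCongr_apply_apply, symm_apply_apply]
  simp [rows, finSuccAboveEquiv_apply, succAbove_rev_add_succAbove_le_iff_lt_triCap]

lemma triNearCount_le_prod {N : ℕ} (a b : Fin (N + 1)) :
    triNearCount (N + 1) a b ≤ ∏ k : Fin N, (triCap N a b k - k) :=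
  (triNearCount_eq_card_perm a b).trans_le <|
    Perm.card_val_lt_le_prod _ ((triCap_monotone N a b).comp Fin.val_strictMono.monotone)

theorem triangle_middle_near_counts_general (n : ℕ) (a : Fin n)
    (ha : (a : ℕ) = (n - 1) / 2) :
    (∀ b : Fin n, (b : ℕ) < (n - 1) / 2 → triNearCount n a b = 0) ∧
    (∀ b : Fin n, triNearCount n a b ≤ 2 ^ ((n + 1) / 2 - 2)) := by
  obtain ⟨N, rfl⟩ : ∃ N, n = N + 1 := ⟨n - 1, by omega⟩
  replace ha : (a : ℕ) = N / 2 := by simpa using ha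
  refine ⟨fun b hb => ?_, fun b => ?_⟩
  · have hzero : triCap N a b b - b = 0 := by rw [triCap_self (by omega), Nat.sub_self]
    exact Nat.eq_zero_of_le_zero <|
      (triNearCount_le_prod a b).trans_eq (prod_eq_zero (mem_univ ⟨b, by omega⟩) hzero)
  have hcard : #{k : Fin N | N - a ≤ (k : ℕ) ∧ (k : ℕ) + 2 ≤ N} ≤ #(Ico (N - a) (N - 1)) :=
    card_le_card_of_injOn Fin.val (fun k hk => by
      simp only [coe_filter, mem_univ, true_and, Set.mem_ofPred_eq, coe_Ico, Set.mem_Ico] at hk ⊢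
      omega) Fin.val_injective.injOn
  calc triNearCount (N + 1) a b ≤ ∏ k : Fin N, (triCap N a b k - k) := triNearCount_le_prod a b
    _ ≤ 2 ^ #{k : Fin N | N - a ≤ (k : ℕ) ∧ (k : ℕ) + 2 ≤ N} :=
      prod_le_pow_card_filter _ fun k _ => triCap_sub_le (Nat.lt_succ_iff.mp b.isLt) k
    _ ≤ 2 ^ ((N + 1 + 1) / 2 - 2) :=
      Nat.pow_le_pow_right two_pos (hcard.trans (by rw [Nat.card_Ico]; omega))

/-- In the odd triangle threshold graph with n×n Ferrers bi-adjacency matrix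
(`A i j = 1` iff `j ≤ n−i+1`, 1-indexed), for the middle index `n' = ⌈n/2⌉`
(so `u_{n'}` has 0-index `(n-1)/2`), the number of near-perfect matchings leaving
`u_{n'}` and `v_i` unmatched is 0 for `i < n'` and at most `2^(n'−2)` for every `i`. -/
theorem triangle_middle_near_counts (n : ℕ) (hn : 2 ≤ n) (a : Fin n)
    (ha : (a : ℕ) = (n - 1) / 2) :
    (∀ b : Fin n, (b : ℕ) < (n - 1) / 2 → triNearCount n a b = 0) ∧
    (∀ b : Fin n, triNearCount n a b ≤ 2 ^ ((n + 1) / 2 - 2)) :=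
  triangle_middle_near_counts_general n a ha
end

section
/- The hexagon chain graph with k hexagons (2n = 6k + 2 vertices) has exactly one perfect matching. -/
/-- Adjacency generating relation of the hexagon chain graph with `k` hexagons:
hexagon `i` is the 6-cycle on `(i, 0), …, (i, 5)`; consecutive hexagons are joined
by the single edge `(i,3)–(i+1,0)`; the extra vertex `u = inl 0` is attached to
`(0,0)` and `v = inl 1` is attached to `(k-1, 3)`. -/
def hexRel (k : ℕ) : Sum (Fin 2) (Fin k × Fin 6) → Sum (Fin 2) (Fin k × Fin 6) → Prop
  | Sum.inl a, Sum.inr p =>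
      (a = 0 ∧ (p.1 : ℕ) = 0 ∧ (p.2 : ℕ) = 0) ∨
      (a = 1 ∧ (p.1 : ℕ) = k - 1 ∧ (p.2 : ℕ) = 3)
  | Sum.inr p, Sum.inr q =>
      (p.1 = q.1 ∧ q.2 = p.2 + 1) ∨
      ((p.1 : ℕ) + 1 = (q.1 : ℕ) ∧ (p.2 : ℕ) = 3 ∧ (q.2 : ℕ) = 0)
  | _, _ => False

/-- The hexagon chain graph with `k` hexagons, on `6k + 2` vertices. -/
def hexGraph (k : ℕ) : SimpleGraph (Sum (Fin 2) (Fin k × Fin 6)) :=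
  SimpleGraph.fromRel (hexRel k)

/-! Every vertex of the chain has a forced partner. The extra vertex `u` has a single neighbour,
so its edge lies in every perfect matching. Once hexagon `i` is entered by a matching edge at
`(i, 0)`, the vertices `(i, 1)` and `(i, 5)` can only be matched to `(i, 2)` and `(i, 4)`,
which leaves `(i, 3)` only its edge out of the hexagon; this edge enters the next hexagon,
or is the edge to `v` at the end of the chain. Hence every perfect matching is the matching
`x ↦ hexPartner n x`, and that map is indeed a perfect matching. -/

namespace SimpleGraph.Subgraph

variable {V : Type*} {G : SimpleGraph V} {M : G.Subgraph} {f : V → V}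

def ofInvolutive (hf : Function.Involutive f) (hG : ∀ v, G.Adj v (f v)) : G.Subgraph where
  verts := Set.univ
  Adj v w := f v = w
  adj_sub := by
    rintro v _ rfl
    exact hG v
  edge_vert _ := Set.mem_univ _
  symm := ⟨by
    rintro v _ rfl
    exact hf v⟩

lemma isPerfectMatching_ofInvolutive (hf : Function.Involutive f) (hG : ∀ v, G.Adj v (f v)) :
    (ofInvolutive hf hG).IsPerfectMatching :=
  isPerfectMatching_iff.mpr fun v => ⟨f v, rfl, fun _ h => Eq.symm h⟩

lemma IsPerfectMatching.eq_ofInvolutive (hM : M.IsPerfectMatching) (hf : Function.Involutive f)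
    (hG : ∀ v, G.Adj v (f v)) (hMf : ∀ v, M.Adj v (f v)) : M = ofInvolutive hf hG := by
  ext v w
  · simpa [ofInvolutive] using hM.2 v
  · exact ⟨fun h => hM.1.eq_of_adj_left (hMf v) h, by rintro rfl; exact hMf v⟩

lemma IsPerfectMatching.adj_apply_of_forall_adj (hM : M.IsPerfectMatching)
    (hf : Function.Involutive f) {v : V} (hv : ∀ w, G.Adj v w → w ≠ f v → M.Adj w (f w)) :
    M.Adj v (f v) := by
  obtain ⟨w, hvw⟩ := (isPerfectMatching_iff.mp hM v).exists
  by_cases hw : w = f v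
  · exact hw ▸ hvw
  obtain rfl : f w = v := hM.1.eq_of_adj_left (hv w (M.adj_sub hvw) hw) hvw.symm
  rw [hf w]
  exact hvw

end SimpleGraph.Subgraph

open SimpleGraph Subgraph

def hexPartner (n : ℕ) : Fin 2 ⊕ (Fin (n + 1) × Fin 6) → Fin 2 ⊕ (Fin (n + 1) × Fin 6)
  | .inl 0 => .inr (0, 0)
  | .inl 1 => .inr (Fin.last n, 3)
  | .inr (i, 0) => Fin.cases (.inl 0) (fun i => .inr (i.castSucc, 3)) i
  | .inr (i, 1) => .inr (i, 2)
  | .inr (i, 2) => .inr (i, 1)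
  | .inr (i, 3) => Fin.lastCases (.inl 1) (fun i => .inr (i.succ, 0)) i
  | .inr (i, 4) => .inr (i, 5)
  | .inr (i, 5) => .inr (i, 4)

lemma hexPartner_involutive (n : ℕ) : Function.Involutive (hexPartner n) := by
  rintro (a | ⟨i, j⟩)
  · fin_cases a <;> simp [hexPartner]
  · fin_cases j <;> simp [hexPartner]
    · induction i using Fin.cases <;> simp
    · induction i using Fin.lastCases <;> simp

lemma hexGraph_adj_hexPartner (n : ℕ) (x : Fin 2 ⊕ (Fin (n + 1) × Fin 6)) :
    (hexGraph (n + 1)).Adj x (hexPartner n x) := by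
  rcases x with a | ⟨i, j⟩
  · fin_cases a <;> simp [hexGraph, hexPartner, hexRel]
  · fin_cases j <;> simp [hexGraph, hexPartner, hexRel]
    · induction i using Fin.cases <;> simp [Fin.ext_iff]
    · induction i using Fin.lastCases <;> simp [Fin.ext_iff]

lemma hexGraph_adj_inl_zero {n : ℕ} {w : Fin 2 ⊕ (Fin (n + 1) × Fin 6)}
    (h : (hexGraph (n + 1)).Adj (.inl 0) w) : w = hexPartner n (.inl 0) := by
  rcases w with b | ⟨i, j⟩ <;>
    simp [hexGraph, hexPartner, hexRel, Prod.ext_iff, Fin.ext_iff, -Fin.val_eq_zero_iff] at h ⊢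
  omega

lemma hexGraph_adj_inr {n : ℕ} {i : Fin (n + 1)} {j : Fin 6} {w : Fin 2 ⊕ (Fin (n + 1) × Fin 6)}
    (hj : j ≠ 0) (h : (hexGraph (n + 1)).Adj (.inr (i, j)) w) :
    w = hexPartner n (.inr (i, j)) ∨ w = .inr (i, j + 1) ∨ w = .inr (i, j - 1) := by
  fin_cases j
  · exact absurd rfl hj
  all_goals
    induction i using Fin.lastCases <;> rcases w with b | ⟨i', j'⟩ <;>
      simp [hexGraph, hexPartner, hexRel, Prod.ext_iff, Fin.ext_iff, Fin.val_add,
        -Fin.val_eq_zero_iff] at h ⊢ <;>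
      omega

variable {n : ℕ} {M : (hexGraph (n + 1)).Subgraph}

lemma hexagon_adj_hexPartner (hM : M.IsPerfectMatching) {i : Fin (n + 1)}
    (h0 : M.Adj (.inr (i, 0)) (hexPartner n (.inr (i, 0)))) (j : Fin 6) :
    M.Adj (.inr (i, j)) (hexPartner n (.inr (i, j))) := by
  have hf := hexPartner_involutive n
  have h1 : M.Adj (.inr (i, 1)) (hexPartner n (.inr (i, 1))) := by
    refine hM.adj_apply_of_forall_adj hf fun w hw hne => ?_
    rcases hexGraph_adj_inr (by decide) hw with rfl | rfl | rfl
    · exact absurd rfl hne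
    · exact absurd rfl hne
    · exact h0
  have h5 : M.Adj (.inr (i, 5)) (hexPartner n (.inr (i, 5))) := by
    refine hM.adj_apply_of_forall_adj hf fun w hw hne => ?_
    rcases hexGraph_adj_inr (by decide) hw with rfl | rfl | rfl
    · exact absurd rfl hne
    · exact h0
    · exact absurd rfl hne
  have h3 : M.Adj (.inr (i, 3)) (hexPartner n (.inr (i, 3))) := by
    refine hM.adj_apply_of_forall_adj hf fun w hw hne => ?_
    rcases hexGraph_adj_inr (by decide) hw with rfl | rfl | rfl
    · exact absurd rfl hne
    · exact h5.symm
    · exact h1.symm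
  fin_cases j
  · exact h0
  · exact h1
  · simpa [hexPartner] using h1.symm
  · exact h3
  · simpa [hexPartner] using h5.symm
  · exact h5

lemma adj_hexPartner_of_isPerfectMatching (hM : M.IsPerfectMatching) :
    ∀ x, M.Adj x (hexPartner n x) := by
  have hu : M.Adj (.inl 0) (hexPartner n (.inl 0)) :=
    hM.adj_apply_of_forall_adj (hexPartner_involutive n) fun _ hw hne =>
      absurd (hexGraph_adj_inl_zero hw) hne
  have hzero : ∀ i, M.Adj (.inr (i, 0)) (hexPartner n (.inr (i, 0))) := by
    intro i
    induction i using Fin.induction with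
    | zero => simpa [hexPartner] using hu.symm
    | succ i ih => simpa [hexPartner] using (hexagon_adj_hexPartner hM ih 3).symm
  rintro (a | ⟨i, j⟩)
  · fin_cases a
    · exact hu
    · simpa [hexPartner] using (hexagon_adj_hexPartner hM (hzero (Fin.last n)) 3).symm
  · exact hexagon_adj_hexPartner hM (hzero i) j

/-- The hexagon chain graph with `k` hexagons (2n = 6k + 2 vertices) has exactly
one perfect matching. -/
theorem hexGraph_unique_perfect_matching (k : ℕ) (hk : 1 ≤ k) :
    Set.ncard {M : (hexGraph k).Subgraph | M.IsPerfectMatching} = 1 := by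
  obtain ⟨n, rfl⟩ := Nat.exists_eq_add_of_le' hk
  rw [Set.ncard_eq_one]
  exact ⟨ofInvolutive (hexPartner_involutive n) (hexGraph_adj_hexPartner n),
    Set.eq_singleton_iff_unique_mem.mpr ⟨isPerfectMatching_ofInvolutive _ _,
      fun M hM => hM.eq_ofInvolutive _ _ (adj_hexPartner_of_isPerfectMatching hM)⟩⟩
end
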